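/- Lemma (maximum of empirical-norm deviations over the net): Let δ = T/8, d > 16, and let {G¹_δ, …, G^{N(δ)}_δ} be the net of the entropy lemma (with N(δ) ≤ (18T/δ)^{2(d+1)k}, ‖G^j_δ − M0‖_∞ ≤ 2a, ‖G^j_δ − M0‖₂ ≤ 2T). Then with probability at least 1 − 4·exp(−p·δ²/(8·a²)), max_{j=1,…,N(δ)} |‖𝒳(M0 − G^j_δ)‖₂ − ‖M0 − G^j_δ‖_{L2(Π)}| ≤ √p·δ + 8·C*·a·√(kd), where C* ≥ 2 is a universal numerical constant. -/

import Mathlib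

/-!
Each net element `G` is handled separately. With `c_ij = (M0 - G)_ij² ∈ [0, 4a²]`, the squared
empirical norm `‖𝒳(M0 - G)‖₂² = ∑ B_ij c_ij` is a weighted sum of independent Bernoulli(p)
variables with mean `‖M0 - G‖²_{L2(Π)}`. Chernoff's bound, with the Bernoulli moment generating
function `E e^{r(b - p)} ≤ exp (p (e^r - 1 - r))`, controls both tails of its square root:
`P(|√X - √EX| > s) ≤ 2 exp (-s²/(8a²))`. For `s = √p δ + 16 a √(kd)`, i.e. `C* = 2`, the factor
`exp (-32kd)` absorbs the size `144^{2(d+1)k} ≤ exp (16(d+1)k)` of the net in the union bound.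
-/

open MeasureTheory ProbabilityTheory

/-- Squared Frobenius norm of a real matrix. -/
noncomputable def frob2 {m1 m2 : ℕ} (A : Matrix (Fin m1) (Fin m2) ℝ) : ℝ :=
  ∑ i, ∑ j, (A i j) ^ 2

/-- Frobenius norm of a real matrix. -/
noncomputable def frob {m1 m2 : ℕ} (A : Matrix (Fin m1) (Fin m2) ℝ) : ℝ :=
  Real.sqrt (frob2 A)

/-- Nuclear (trace) norm of a real matrix: sum of its singular values. -/
noncomputable def nucNorm {m1 m2 : ℕ} (A : Matrix (Fin m1) (Fin m2) ℝ) : ℝ :=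
  ∑ i, Real.sqrt ((show (A.transpose * A).IsHermitian by
    simpa using Matrix.isHermitian_conjTranspose_mul_self A).eigenvalues i)

/-- Operator (spectral) norm of a real matrix. -/
noncomputable def opNorm {m1 m2 : ℕ} (A : Matrix (Fin m1) (Fin m2) ℝ) : ℝ :=
  ⨆ v : {v : Fin m2 → ℝ // ∑ j, (v j) ^ 2 ≤ 1}, Real.sqrt (∑ i, (A.mulVec v.1 i) ^ 2)

/-- Matrix scalar product ⟨A,B⟩ = tr(AᵀB). -/
noncomputable def mdot {m1 m2 : ℕ} (A B : Matrix (Fin m1) (Fin m2) ℝ) : ℝ :=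
  ∑ i, ∑ j, A i j * B i j

/-- Entrywise multiplication by a realized sampling pattern `B0`; this models the
observation operator 𝒳 for one realization of the Bernoulli masks. -/
noncomputable def hadB {m1 m2 : ℕ} (B0 A : Matrix (Fin m1) (Fin m2) ℝ) :
    Matrix (Fin m1) (Fin m2) ℝ :=
  Matrix.of fun i j => B0 i j * A i j

/-- The entries of `B` are i.i.d. Bernoulli(p) random variables (taking values 0/1). -/
def IsBernoulliMatrix {m1 m2 : ℕ} {Ω : Type} [MeasurableSpace Ω] (P : Measure Ω)
    (B : Ω → Matrix (Fin m1) (Fin m2) ℝ) (p : ℝ) : Prop :=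
  (∀ i j, Measurable fun ω => B ω i j) ∧
  (∀ ω i j, B ω i j = 0 ∨ B ω i j = 1) ∧
  (∀ i j, P {ω | B ω i j = 1} = ENNReal.ofReal p) ∧
  iIndepFun (fun q : Fin m1 × Fin m2 => fun ω => B ω q.1 q.2) P

/-- The noise entries are measurable, centered, with variance σ², and bounded by U a.s. -/
def IsBoundedNoise {m1 m2 : ℕ} {Ω : Type} [MeasurableSpace Ω] (P : Measure Ω)
    (E : Ω → Matrix (Fin m1) (Fin m2) ℝ) (σ U : ℝ) : Prop :=
  (∀ i j, Measurable fun ω => E ω i j) ∧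
  (∀ i j, ∫ ω, E ω i j ∂P = 0) ∧
  (∀ i j, ∫ ω, (E ω i j) ^ 2 ∂P = σ ^ 2) ∧
  (∀ i j, ∀ᵐ ω ∂P, |E ω i j| ≤ U)

/-- The entries of `e` are Rademacher (±1, fair) random variables. -/
def IsRademacherMatrix {m1 m2 : ℕ} {Ω : Type} [MeasurableSpace Ω] (P : Measure Ω)
    (e : Ω → Matrix (Fin m1) (Fin m2) ℝ) : Prop :=
  (∀ i j, Measurable fun ω => e ω i j) ∧
  (∀ ω i j, e ω i j = 1 ∨ e ω i j = -1) ∧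
  (∀ i j, P {ω | e ω i j = 1} = 1 / 2)

/-- The entries of `B` and `E` together form an independent family. -/
def JointlyIndep {m1 m2 : ℕ} {Ω : Type} [MeasurableSpace Ω] (P : Measure Ω)
    (B E : Ω → Matrix (Fin m1) (Fin m2) ℝ) : Prop :=
  iIndepFun
    (Sum.elim (fun q : Fin m1 × Fin m2 => fun ω => B ω q.1 q.2)
              (fun q : Fin m1 × Fin m2 => fun ω => E ω q.1 q.2)) P

/-- The class 𝒞(k,a): rank ≤ k, sup-norm ≤ a, and ‖M0−A‖₂² ≥ 256(a∨U)²zd/p. -/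
def classC {m1 m2 : ℕ} (M0 : Matrix (Fin m1) (Fin m2) ℝ) (a U z p : ℝ) (k : ℕ) :
    Set (Matrix (Fin m1) (Fin m2) ℝ) :=
  {A | (∀ i j, |A i j| ≤ a) ∧ 256 * (max a U) ^ 2 * z * (m1 + m2) / p ≤ frob2 (M0 - A) ∧
    A.rank ≤ k}

/-- 𝒞 = ∪_{k=1}^m 𝒞(k,a). -/
def classCfull {m1 m2 : ℕ} (M0 : Matrix (Fin m1) (Fin m2) ℝ) (a U z p : ℝ) :
    Set (Matrix (Fin m1) (Fin m2) ℝ) :=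
  ⋃ k ∈ Finset.Icc 1 (min m1 m2), classC M0 a U z p k

/-- 𝒞(k,a,T) = {A ∈ 𝒞(k,a) : ‖M0−A‖₂ ≤ T}. -/
def classCT {m1 m2 : ℕ} (M0 : Matrix (Fin m1) (Fin m2) ℝ) (a U z p : ℝ) (k : ℕ) (T : ℝ) :
    Set (Matrix (Fin m1) (Fin m2) ℝ) :=
  {A | A ∈ classC M0 a U z p k ∧ frob (M0 - A) ≤ T}

/-- 𝒟_δ(k,a,T) = {A : ‖A‖_∞ ≤ a, ‖A‖₂ ≤ δ, ‖A‖_* ≤ √k·T}. -/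
def classD {m1 m2 : ℕ} (k : ℕ) (a δ T : ℝ) : Set (Matrix (Fin m1) (Fin m2) ℝ) :=
  {A | (∀ i j, |A i j| ≤ a) ∧ frob A ≤ δ ∧ nucNorm A ≤ Real.sqrt k * T}

open Real

lemma exp_neg_le_one_sub_add_sq_div_two {y : ℝ} (hy : 0 ≤ y) :
    exp (-y) ≤ 1 - y + y ^ 2 / 2 := by
  have hpos : 0 < 1 + y + y ^ 2 / 2 := by positivity
  -- `(1 + y + y²/2)(1 - y + y²/2) = 1 + y⁴/4`
  calc exp (-y) = (exp y)⁻¹ := exp_neg y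
    _ ≤ (1 + y + y ^ 2 / 2)⁻¹ := inv_anti₀ hpos (quadratic_le_exp_of_nonneg hy)
    _ ≤ 1 - y + y ^ 2 / 2 := by
      rw [inv_le_iff_one_le_mul₀ hpos]
      nlinarith [pow_nonneg hy 4]

lemma exp_sub_one_sub_le_sq {x : ℝ} (hx : |x| ≤ 1) : exp x - 1 - x ≤ x ^ 2 :=
  (le_abs_self _).trans (abs_exp_sub_one_sub_id_le hx)

section Bernoulli

variable {Ω ι : Type*} [MeasurableSpace Ω] {P : Measure Ω} {p : ℝ}

structure IsBernoulli (P : Measure Ω) (b : Ω → ℝ) (p : ℝ) : Prop where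
  measurable : Measurable b
  zero_or_one : ∀ ω, b ω = 0 ∨ b ω = 1
  measure_eq_one : P {ω | b ω = 1} = ENNReal.ofReal p

namespace IsBernoulli

variable {b : Ω → ℝ}

lemma eq_indicator (hb : IsBernoulli P b p) : b = {ω | b ω = 1}.indicator fun _ => 1 := by
  ext ω
  rcases hb.zero_or_one ω with h | h <;> simp [Set.indicator, h]

lemma measurableSet_eq_one (hb : IsBernoulli P b p) : MeasurableSet {ω | b ω = 1} :=
  hb.measurable (measurableSet_singleton 1)

lemma integrable [IsFiniteMeasure P] (hb : IsBernoulli P b p) : Integrable b P := by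
  rw [hb.eq_indicator]
  exact (integrable_const 1).indicator hb.measurableSet_eq_one

lemma integral_eq (hb : IsBernoulli P b p) (hp : 0 ≤ p) : ∫ ω, b ω ∂P = p := by
  rw [hb.eq_indicator, integral_indicator_const 1 hb.measurableSet_eq_one,
    measureReal_def, hb.measure_eq_one, ENNReal.toReal_ofReal hp, smul_eq_mul, mul_one]

lemma exp_mul_sub_eq (hb : IsBernoulli P b p) (r : ℝ) (ω : Ω) :
    exp (r * (b ω - p)) = exp (-(p * r)) * (1 + (exp r - 1) * b ω) := by
  rcases hb.zero_or_one ω with h | h <;> rw [h]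
  · simp [mul_comm]
  · rw [mul_one, add_sub_cancel, ← exp_add]; ring_nf

lemma integrable_exp_mul_sub [IsFiniteMeasure P] (hb : IsBernoulli P b p) (r : ℝ) :
    Integrable (fun ω => exp (r * (b ω - p))) P := by
  simp_rw [hb.exp_mul_sub_eq r]
  exact ((integrable_const 1).add (hb.integrable.const_mul _)).const_mul _

lemma mgf_sub_le [IsProbabilityMeasure P] (hb : IsBernoulli P b p) (hp : 0 ≤ p) (r : ℝ) :
    mgf (fun ω => b ω - p) P r ≤ exp (p * (exp r - 1 - r)) := by
  calc mgf (fun ω => b ω - p) P r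
      = exp (-(p * r)) * (1 + (exp r - 1) * p) := by
        simp_rw [mgf, hb.exp_mul_sub_eq r]
        rw [integral_const_mul, integral_add (integrable_const 1) (hb.integrable.const_mul _),
          integral_const_mul, hb.integral_eq hp]
        simp
    _ ≤ exp (-(p * r)) * exp (p * (exp r - 1)) := by
        gcongr
        linarith [add_one_le_exp (p * (exp r - 1))]
    _ = exp (p * (exp r - 1 - r)) := by rw [← exp_add]; ring_nf

end IsBernoulli

variable {b : ι → Ω → ℝ}

lemma ProbabilityTheory.iIndepFun.const_mul_sub (hind : iIndepFun b P) (c : ι → ℝ) (p : ℝ) :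
    iIndepFun (fun q ω => c q * (b q ω - p)) P :=
  hind.comp (fun q x => c q * (x - p)) fun q => (measurable_id.sub_const p).const_mul (c q)

variable [Fintype ι] [IsProbabilityMeasure P]

lemma mgf_weightedSum_sub_le (hb : ∀ q, IsBernoulli P (b q) p) (hind : iIndepFun b P)
    (hp : 0 ≤ p) (c : ι → ℝ) (t : ℝ) :
    mgf (fun ω => ∑ q, c q * (b q ω - p)) P t ≤
      exp (p * ∑ q, (exp (t * c q) - 1 - t * c q)) := by
  have hmeas : ∀ q, Measurable fun ω => c q * (b q ω - p) :=
    fun q => ((hb q).measurable.sub_const p).const_mul (c q)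
  have hind' := hind.const_mul_sub c p
  have hsum : (fun ω => ∑ q, c q * (b q ω - p)) = ∑ q, fun ω => c q * (b q ω - p) := by
    ext ω; simp [Finset.sum_apply]
  rw [hsum, hind'.mgf_sum hmeas, Finset.mul_sum, exp_sum]
  refine Finset.prod_le_prod (fun q _ => mgf_nonneg) fun q _ => ?_
  rw [mgf_const_mul, mul_comm t]
  exact (hb q).mgf_sub_le hp _

lemma measure_le_weightedSum_sub_le (hb : ∀ q, IsBernoulli P (b q) p) (hind : iIndepFun b P)
    (hp : 0 ≤ p) (c : ι → ℝ) (ε : ℝ) {t : ℝ} (ht : 0 ≤ t) :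
    P {ω | ε ≤ ∑ q, c q * (b q ω - p)} ≤
      ENNReal.ofReal (exp (-(t * ε) + p * ∑ q, (exp (t * c q) - 1 - t * c q))) := by
  have hmeas : ∀ q, Measurable fun ω => c q * (b q ω - p) :=
    fun q => ((hb q).measurable.sub_const p).const_mul (c q)
  have hind' := hind.const_mul_sub c p
  have hint : Integrable (fun ω => exp (t * ∑ q, c q * (b q ω - p))) P := by
    simpa [Finset.sum_apply] using hind'.integrable_exp_mul_sum hmeas (s := Finset.univ)
      fun q _ => by simpa [mul_assoc] using (hb q).integrable_exp_mul_sub (t * c q)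
  rw [← ofReal_measureReal]
  refine ENNReal.ofReal_le_ofReal ((measure_ge_le_exp_mul_mgf ε ht hint).trans ?_)
  rw [exp_add, neg_mul]
  gcongr
  exact mgf_weightedSum_sub_le hb hind hp c t

end Bernoulli

lemma sum_mul_sub_eq {Ω ι : Type*} [Fintype ι] (b : ι → Ω → ℝ) (c : ι → ℝ) (p : ℝ)
    (ω : Ω) :
    ∑ q, c q * (b q ω - p) = ∑ q, c q * b q ω - p * ∑ q, c q := by
  simp only [mul_sub, Finset.sum_sub_distrib, ← Finset.sum_mul]
  ring

section SqrtDeviation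

variable {Ω ι : Type*} [MeasurableSpace Ω] {P : Measure Ω} [IsProbabilityMeasure P] [Fintype ι]
  {b : ι → Ω → ℝ} {p : ℝ} {c : ι → ℝ} {L s : ℝ}

lemma measure_sqrt_weightedSum_upper_tail_le
    (hb : ∀ q, IsBernoulli P (b q) p) (hind : iIndepFun b P) (hp : 0 ≤ p)
    (hL : 0 < L) (hc : ∀ q, c q ∈ Set.Icc 0 L) (hs : 0 < s) :
    P {ω | s < √(∑ q, c q * b q ω) - √(p * ∑ q, c q)} ≤
      ENNReal.ofReal (exp (-(s ^ 2 / L))) := by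
  set m := √(p * ∑ q, c q)
  have hm : 0 ≤ m := sqrt_nonneg _
  have hm2 : m ^ 2 = p * ∑ q, c q :=
    sq_sqrt (mul_nonneg hp (Finset.sum_nonneg fun q _ => (hc q).1))
  set x := s / (s + m)
  have hx0 : 0 ≤ x := by positivity
  have hx1 : x ≤ 1 := div_le_one_of_le₀ (by linarith) (by positivity)
  have hevent : {ω | s < √(∑ q, c q * b q ω) - m} ⊆
      {ω | s ^ 2 + 2 * s * m ≤ ∑ q, c q * (b q ω - p)} := by
    intro ω hω
    have hX : (m + s) ^ 2 < ∑ q, c q * b q ω :=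
      (lt_sqrt (by positivity)).1 (by simp only [Set.mem_ofPred_eq] at hω; linarith)
    simp only [Set.mem_ofPred_eq, sum_mul_sub_eq, ← hm2]
    nlinarith
  have hterm : ∀ q, exp (x / L * c q) - 1 - x / L * c q ≤ x ^ 2 / L * c q := by
    intro q
    obtain ⟨hc0, hcL⟩ := hc q
    have hcL' : c q / L ≤ 1 := (div_le_one hL).2 hcL
    have harg : |x / L * c q| ≤ 1 := by
      rw [abs_of_nonneg (by positivity), div_mul_eq_mul_div, mul_div_assoc]
      exact mul_le_one₀ hx1 (by positivity) hcL'
    calc _ ≤ (x / L * c q) ^ 2 := exp_sub_one_sub_le_sq harg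
      _ = x ^ 2 / L * c q * (c q / L) := by field_simp
      _ ≤ x ^ 2 / L * c q := mul_le_of_le_one_right (by positivity) hcL'
  have hsum : p * ∑ q, (exp (x / L * c q) - 1 - x / L * c q) ≤ x ^ 2 / L * m ^ 2 := by
    rw [hm2, Finset.mul_sum, Finset.mul_sum, Finset.mul_sum]
    exact Finset.sum_le_sum fun q _ => by nlinarith [hterm q]
  -- `x (s² + 2sm) - x² m² - s² = s³ m / (s + m)²`
  have hkey : s ^ 2 ≤ x * (s ^ 2 + 2 * s * m) - x ^ 2 * m ^ 2 := by
    have hsm : 0 < s + m := by positivity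
    rw [div_pow, div_mul_eq_mul_div, div_mul_eq_mul_div, div_sub_div _ _ hsm.ne' (by positivity),
      le_div_iff₀ (by positivity)]
    nlinarith [mul_nonneg (pow_nonneg hs.le 3) hm]
  refine (measure_mono hevent).trans ((measure_le_weightedSum_sub_le hb hind hp c _
    (div_nonneg hx0 hL.le)).trans (ENNReal.ofReal_le_ofReal (exp_le_exp.2 ?_)))
  calc _ ≤ -(x / L * (s ^ 2 + 2 * s * m)) + x ^ 2 / L * m ^ 2 := by linarith
    _ = -((x * (s ^ 2 + 2 * s * m) - x ^ 2 * m ^ 2) / L) := by ring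
    _ ≤ -(s ^ 2 / L) := by gcongr

lemma measure_sqrt_weightedSum_lower_tail_le
    (hb : ∀ q, IsBernoulli P (b q) p) (hind : iIndepFun b P) (hp : 0 ≤ p)
    (hL : 0 < L) (hc : ∀ q, c q ∈ Set.Icc 0 L) (hs : 0 < s) :
    P {ω | s < √(p * ∑ q, c q) - √(∑ q, c q * b q ω)} ≤
      ENNReal.ofReal (exp (-(s ^ 2 / (2 * L)))) := by
  set m := √(p * ∑ q, c q)
  have hm2 : m ^ 2 = p * ∑ q, c q :=
    sq_sqrt (mul_nonneg hp (Finset.sum_nonneg fun q _ => (hc q).1))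
  rcases (sqrt_nonneg _ : 0 ≤ m).eq_or_lt with hm0 | hm
  · have hempty : {ω | s < m - √(∑ q, c q * b q ω)} = ∅ := by
      ext ω
      simp only [Set.mem_ofPred_eq, Set.mem_empty_iff_false, iff_false, not_lt]
      linarith [hm0, sqrt_nonneg (∑ q, c q * b q ω)]
    simp [hempty]
  replace hm : 0 < m := hm
  set t := s / (L * m) with ht_def
  have ht : 0 ≤ t := by positivity
  have hevent : {ω | s < m - √(∑ q, c q * b q ω)} ⊆
      {ω | s * m ≤ ∑ q, -c q * (b q ω - p)} := by
    intro ω hω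
    simp only [Set.mem_ofPred_eq] at hω
    have hX : ∑ q, c q * b q ω < (m - s) ^ 2 :=
      (sqrt_lt' (by linarith [sqrt_nonneg (∑ q, c q * b q ω)])).1 (by linarith)
    have hsm : s < m := by linarith [sqrt_nonneg (∑ q, c q * b q ω)]
    simp only [Set.mem_ofPred_eq, neg_mul, Finset.sum_neg_distrib, sum_mul_sub_eq, ← hm2]
    nlinarith
  have hterm : ∀ q, exp (t * -c q) - 1 - t * -c q ≤ t ^ 2 * L / 2 * c q := by
    intro q
    obtain ⟨hc0, hcL⟩ := hc q
    rw [mul_neg]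
    have := exp_neg_le_one_sub_add_sq_div_two (mul_nonneg ht hc0)
    nlinarith [mul_le_mul_of_nonneg_left hcL (mul_nonneg (sq_nonneg t) hc0)]
  have hsum : p * ∑ q, (exp (t * -c q) - 1 - t * -c q) ≤ s ^ 2 / (2 * L) := by
    calc _ ≤ p * ∑ q, t ^ 2 * L / 2 * c q := by gcongr with q; exact hterm q
      _ = t ^ 2 * L / 2 * m ^ 2 := by rw [← Finset.mul_sum, hm2]; ring
      _ = s ^ 2 / (2 * L) := by rw [ht_def]; field_simp
  refine (measure_mono hevent).trans ((measure_le_weightedSum_sub_le hb hind hp _ _ ht).trans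
    (ENNReal.ofReal_le_ofReal (exp_le_exp.2 ?_)))
  have hlin : t * (s * m) = s ^ 2 / L := by rw [ht_def]; field_simp
  rw [hlin]
  linarith [show s ^ 2 / L = 2 * (s ^ 2 / (2 * L)) by field_simp]

lemma measure_lt_abs_sqrt_weightedSum_sub_le
    (hb : ∀ q, IsBernoulli P (b q) p) (hind : iIndepFun b P) (hp : 0 ≤ p)
    (hL : 0 < L) (hc : ∀ q, c q ∈ Set.Icc 0 L) (hs : 0 < s) :
    P {ω | s < |√(∑ q, c q * b q ω) - √(p * ∑ q, c q)|} ≤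
      ENNReal.ofReal (2 * exp (-(s ^ 2 / (2 * L)))) := by
  have hsplit : {ω | s < |√(∑ q, c q * b q ω) - √(p * ∑ q, c q)|} =
      {ω | s < √(∑ q, c q * b q ω) - √(p * ∑ q, c q)} ∪
        {ω | s < √(p * ∑ q, c q) - √(∑ q, c q * b q ω)} := by
    ext ω
    simp only [Set.mem_ofPred_eq, Set.mem_union, lt_abs, neg_sub]
  have hweaker : exp (-(s ^ 2 / L)) ≤ exp (-(s ^ 2 / (2 * L))) := by
    gcongr
    linarith
  rw [hsplit, two_mul, ENNReal.ofReal_add (exp_nonneg _) (exp_nonneg _)]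
  exact (measure_union_le _ _).trans (add_le_add
    ((measure_sqrt_weightedSum_upper_tail_le hb hind hp hL hc hs).trans
      (ENNReal.ofReal_le_ofReal hweaker))
    (measure_sqrt_weightedSum_lower_tail_le hb hind hp hL hc hs))

end SqrtDeviation

lemma one_sub_ofReal_card_mul_le_measure {Ω ι : Type*} [MeasurableSpace Ω] {P : Measure Ω}
    [IsProbabilityMeasure P] (I : Finset ι) {E : ι → Set Ω} {ε : ℝ}
    (hE : ∀ i ∈ I, P (E i) ≤ ENNReal.ofReal ε) :
    1 - ENNReal.ofReal (I.card * ε) ≤ P {ω | ∀ i ∈ I, ω ∉ E i} := by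
  set U := ⋃ i ∈ I, E i
  have hcompl : {ω | ∀ i ∈ I, ω ∉ E i} = Uᶜ := by ext; simp [U]
  have hU : P U ≤ ENNReal.ofReal (I.card * ε) := by
    rw [ENNReal.ofReal_mul (Nat.cast_nonneg _), ENNReal.ofReal_natCast, ← nsmul_eq_mul]
    exact (measure_biUnion_finset_le I E).trans (Finset.sum_le_card_nsmul I _ _ hE)
  rw [hcompl, tsub_le_iff_right]
  calc 1 = P (Uᶜ ∪ U) := by rw [Set.compl_union_self, measure_univ]
    _ ≤ P Uᶜ + P U := measure_union_le _ _
    _ ≤ P Uᶜ + ENNReal.ofReal (I.card * ε) := by gcongr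

lemma mul_exp_neg_le_of_le_pow {N x y : ℝ} {d k : ℕ} (hd : 1 ≤ d)
    (hN : N ≤ 144 ^ (2 * (d + 1) * k)) (hxy : x + 32 * (k * d) ≤ y) :
    N * exp (-y) ≤ exp (-x) := by
  have h144 : (144 : ℝ) ≤ exp 8 :=
    calc (144 : ℝ) ≤ 2 ^ 8 := by norm_num
      _ ≤ exp 1 ^ 8 := pow_le_pow_left₀ zero_le_two (by linarith [add_one_le_exp 1]) 8
      _ = exp 8 := by rw [← exp_nat_mul]; norm_num
  have hN' : N ≤ exp (16 * ((d + 1) * k)) :=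
    calc N ≤ 144 ^ (2 * (d + 1) * k) := hN
      _ ≤ exp 8 ^ (2 * (d + 1) * k) := pow_le_pow_left₀ (by norm_num) h144 _
      _ = exp (16 * ((d + 1) * k)) := by rw [← exp_nat_mul]; push_cast; ring_nf
  have hd' : (1 : ℝ) ≤ d := by exact_mod_cast hd
  calc N * exp (-y) ≤ exp (16 * ((d + 1) * k)) * exp (-y) := by gcongr
    _ = exp (16 * ((d + 1) * k) - y) := by rw [← exp_add, sub_eq_add_neg]
    _ ≤ exp (-x) := exp_le_exp.2 (by nlinarith [(k.cast_nonneg : (0 : ℝ) ≤ k)])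

lemma sq_add_le_sq_sqrt_mul_add {p δ C a κ : ℝ} (hp : 0 ≤ p) (hδ : 0 ≤ δ) (hCa : 0 ≤ C * a)
    (hκ : 0 ≤ κ) : p * δ ^ 2 + 64 * C ^ 2 * a ^ 2 * κ ≤ (√p * δ + 8 * C * a * √κ) ^ 2 := by
  have hcross : 0 ≤ √p * δ * (C * a * √κ) := by positivity
  simp only [add_sq, mul_pow, sq_sqrt hp, sq_sqrt hκ]
  nlinarith

section Matrix

variable {m1 m2 : ℕ}

lemma IsBernoulliMatrix.isBernoulli {Ω : Type} [MeasurableSpace Ω] {P : Measure Ω}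
    {B : Ω → Matrix (Fin m1) (Fin m2) ℝ} {p : ℝ} (hB : IsBernoulliMatrix P B p)
    (q : Fin m1 × Fin m2) : IsBernoulli P (fun ω => B ω q.1 q.2) p :=
  ⟨hB.1 q.1 q.2, fun ω => hB.2.1 ω q.1 q.2, hB.2.2.1 q.1 q.2⟩

lemma frob_hadB_eq_sqrt_sum {B0 : Matrix (Fin m1) (Fin m2) ℝ}
    (hB0 : ∀ i j, B0 i j = 0 ∨ B0 i j = 1) (A : Matrix (Fin m1) (Fin m2) ℝ) :
    frob (hadB B0 A) = √(∑ q : Fin m1 × Fin m2, A q.1 q.2 ^ 2 * B0 q.1 q.2) := by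
  rw [frob, frob2, Fintype.sum_prod_type]
  congr 1
  refine Finset.sum_congr rfl fun i _ => Finset.sum_congr rfl fun j _ => ?_
  rcases hB0 i j with h | h <;> simp [hadB, h]

lemma sqrt_mul_frob {p : ℝ} (hp : 0 ≤ p) (A : Matrix (Fin m1) (Fin m2) ℝ) :
    √p * frob A = √(p * ∑ q : Fin m1 × Fin m2, A q.1 q.2 ^ 2) := by
  rw [frob, frob2, sqrt_mul hp, Fintype.sum_prod_type]

lemma measure_lt_abs_frob_hadB_sub_le {Ω : Type} [MeasurableSpace Ω] {P : Measure Ω}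
    [IsProbabilityMeasure P] {B : Ω → Matrix (Fin m1) (Fin m2) ℝ} {p : ℝ}
    (hB : IsBernoulliMatrix P B p) (hp : 0 ≤ p) {A : Matrix (Fin m1) (Fin m2) ℝ} {K : ℝ}
    (hK : 0 < K) (hA : ∀ i j, |A i j| ≤ K) {s : ℝ} (hs : 0 < s) :
    P {ω | s < |frob (hadB (B ω) A) - √p * frob A|} ≤
      ENNReal.ofReal (2 * exp (-(s ^ 2 / (2 * K ^ 2)))) := by
  have hc : ∀ q : Fin m1 × Fin m2, A q.1 q.2 ^ 2 ∈ Set.Icc 0 (K ^ 2) :=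
    fun q => ⟨sq_nonneg _, sq_le_sq.2 (by rw [abs_of_pos hK]; exact hA q.1 q.2)⟩
  simp_rw [frob_hadB_eq_sqrt_sum (hB.2.1 _), sqrt_mul_frob hp]
  exact measure_lt_abs_sqrt_weightedSum_sub_le hB.isBernoulli hB.2.2.2 hp (by positivity) hc hs

end Matrix

/-- Maximum of empirical-norm deviations over the net: there is a universal constant C* ≥ 2
such that for δ = T/8 and d > 16, with probability at least 1 − 4exp(−pδ²/(8a²)),
max_j |‖𝒳(M0−G^j)‖₂ − ‖M0−G^j‖_{L2(Π)}| ≤ √p·δ + 8C*a√(kd). -/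
theorem net_max_deviation_bound :
    ∃ Cstar : ℝ, 2 ≤ Cstar ∧
      ∀ (m1 m2 n k : ℕ) (a p T δ : ℝ)
        (Ω : Type) [MeasurableSpace Ω] (P : Measure Ω), IsProbabilityMeasure P →
        ∀ (B : Ω → Matrix (Fin m1) (Fin m2) ℝ) (M0 : Matrix (Fin m1) (Fin m2) ℝ)
          (net : Finset (Matrix (Fin m1) (Fin m2) ℝ)),
        0 < m1 → 0 < m2 → 0 < n → n ≤ m1 * m2 → p = (n : ℝ) / (m1 * m2) →
        0 < a → 0 < T → δ = T / 8 → 1 ≤ k → 16 < m1 + m2 →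
        IsBernoulliMatrix P B p →
        (net.card : ℝ) ≤ (18 * T / δ) ^ (2 * (m1 + m2 + 1) * k) →
        (∀ G ∈ net, (∀ i j, |G i j - M0 i j| ≤ 2 * a) ∧ frob (G - M0) ≤ 2 * T) →
        1 - ENNReal.ofReal (4 * Real.exp (-(p * δ ^ 2) / (8 * a ^ 2))) ≤
          P {ω | ∀ G ∈ net,
            |frob (hadB (B ω) (M0 - G)) - Real.sqrt p * frob (M0 - G)| ≤
              Real.sqrt p * δ + 8 * Cstar * a * Real.sqrt (k * (m1 + m2))} := by
  refine ⟨2, le_rfl, ?_⟩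
  intro m1 m2 n k a p T δ Ω _ P _ B M0 net _ _ _ _ hp_def ha hT hδ hk hd hB hcard hnet
  subst hδ
  have hp : 0 ≤ p := hp_def ▸ by positivity
  have hkd : (1 : ℝ) ≤ k * (m1 + m2) := by
    have : 1 ≤ k * (m1 + m2) := Nat.one_le_iff_ne_zero.2 (by positivity)
    exact_mod_cast this
  set s := √p * (T / 8) + 8 * 2 * a * √(k * (m1 + m2))
  have hs : 0 < s := by positivity
  have hs2 : _ ≤ s ^ 2 := sq_add_le_sq_sqrt_mul_add hp (by positivity : 0 ≤ T / 8)
    (by positivity : 0 ≤ 2 * a) (zero_le_one.trans hkd)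
  have hG : ∀ G ∈ net, P {ω | s < |frob (hadB (B ω) (M0 - G)) - √p * frob (M0 - G)|} ≤
      ENNReal.ofReal (2 * exp (-(s ^ 2 / (2 * (2 * a) ^ 2)))) := fun G hG =>
    measure_lt_abs_frob_hadB_sub_le hB hp (by positivity)
      (fun i j => by simpa [abs_sub_comm] using (hnet G hG).1 i j) hs
  have hcount : (net.card : ℝ) * (2 * exp (-(s ^ 2 / (2 * (2 * a) ^ 2)))) ≤
      4 * exp (-(p * (T / 8) ^ 2) / (8 * a ^ 2)) := by
    have h144 : 18 * T / (T / 8) = 144 := by field_simp; norm_num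
    have hexp := mul_exp_neg_le_of_le_pow (d := m1 + m2) (by omega) (hcard.trans_eq (by rw [h144]))
      (x := p * (T / 8) ^ 2 / (8 * a ^ 2)) (y := s ^ 2 / (2 * (2 * a) ^ 2))
      (by rw [show 2 * (2 * a) ^ 2 = 8 * a ^ 2 by ring, div_add' _ _ _ (by positivity),
            div_le_div_iff_of_pos_right (by positivity)]
          push_cast; nlinarith)
    rw [neg_div]
    nlinarith [exp_nonneg (-(p * (T / 8) ^ 2 / (8 * a ^ 2)))]
  calc 1 - ENNReal.ofReal (4 * exp (-(p * (T / 8) ^ 2) / (8 * a ^ 2)))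
      ≤ 1 - ENNReal.ofReal (net.card * (2 * exp (-(s ^ 2 / (2 * (2 * a) ^ 2))))) := by
        gcongr
    _ ≤ P {ω | ∀ G ∈ net,
          ω ∉ {ω | s < |frob (hadB (B ω) (M0 - G)) - √p * frob (M0 - G)|}} :=
        one_sub_ofReal_card_mul_le_measure net hG
    _ ≤ _ := by
        refine measure_mono fun ω hω G hG => ?_
        exact not_lt.1 (hω G hG)
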